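/- arXiv:1702.05141 — 2 statements merged into one kernel-verified Lean document; each statement's English description precedes it below -/
import Mathlib

section
/- Let M be a loopless matroid on a finite nonempty ground set E and let x ∈ ℝ^E. If u, w ∈ C(x) and λ, μ ∈ ℝ satisfy max(λ,μ) = 0, then the vector e ↦ max(λ + u(e), μ + w(e)) belongs to C(x); i.e., the set of M-ultrametrics l∞-nearest to x is tropically convex. -/
/-!
Membership of `e` in some `w`-minimum basis is the greedy condition that `e` is not spanned by
the elements strictly lighter than `e`. This condition survives adding a constant to `w`, and it
passes to pointwise maxima: for `max u w`, the elements lighter than `e` are lighter for whichever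
of `u`, `w` attains the maximum at `e`. A tropical combination of `u` and `w` lies coordinatewise
between them, so its distance to `x` is at most the common distance of the two nearest points.
-/

variable {α : Type*}

/-- The weight of a set `B` with respect to `w`. -/
noncomputable def bweight (w : α → ℝ) (B : Set α) : ℝ := ∑ᶠ e ∈ B, w e

/-- `B` is a `w`-minimum basis of `M`. -/
def MinBase (M : Matroid α) (w : α → ℝ) (B : Set α) : Prop :=
  M.IsBase B ∧ ∀ B', M.IsBase B' → bweight w B ≤ bweight w B'

/-- `w` is an `M`-ultrametric: every ground element lies in some `w`-minimum basis. -/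
def MUltrametric (M : Matroid α) (w : α → ℝ) : Prop :=
  ∀ e ∈ M.E, ∃ B, MinBase M w B ∧ e ∈ B

/-- The `l∞`-distance `‖x - y‖∞ = max_e |x e - y e|`. -/
noncomputable def linf [Fintype α] [Nonempty α] (x y : α → ℝ) : ℝ :=
  Finset.univ.sup' Finset.univ_nonempty fun e => |x e - y e|

/-- `C(x)`: the set of `M`-ultrametrics that are `l∞`-nearest to `x`. -/
def CSet [Fintype α] [Nonempty α] (M : Matroid α) (x : α → ℝ) : Set (α → ℝ) :=
  {w | MUltrametric M w ∧ ∀ u, MUltrametric M u → linf x w ≤ linf x u}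

/-- The tropical convex hull of a nonempty finite set `V ⊆ ℝ^E`. -/
def tconv (V : Finset (α → ℝ)) (hV : V.Nonempty) : Set (α → ℝ) :=
  {w | ∃ lam : (α → ℝ) → ℝ, V.sup' hV lam = 0 ∧
    ∀ e, w e = V.sup' hV fun v => lam v + v e}

open Set Matroid

section

variable {M : Matroid α} {u v w : α → ℝ} {B : Set α} {e f : α}

lemma bweight_insert_sdiff_singleton (hB : B.Finite) (he : e ∉ B) (hf : f ∈ B) :
    bweight w (insert e (B \ {f})) = bweight w B + w e - w f := by
  have hins := finsum_mem_insert w (fun h : e ∈ B \ {f} => he h.1) hB.sdiff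
  have hdel := finsum_mem_insert w (fun h : f ∈ B \ {f} => h.2 rfl) (hB.sdiff (t := {f}))
  rw [insert_sdiff_singleton, insert_eq_of_mem hf] at hdel
  simp only [bweight]
  linarith

lemma exists_minBase [M.Finite] (w : α → ℝ) : ∃ B, MinBase M w B := by
  have hfin : {B | M.IsBase B}.Finite :=
    M.ground_finite.finite_subsets.subset fun _ hB => hB.subset_ground
  obtain ⟨B, hB, hmin⟩ := hfin.exists_minimalFor (bweight w) _ M.exists_isBase
  exact ⟨B, hB, fun B' hB' => (le_total _ _).elim id (hmin hB')⟩

lemma MinBase.le_of_exchange [M.RankFinite] (hB : MinBase M v B) (he : e ∉ B) (hf : f ∈ B)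
    (hB' : M.IsBase (insert e (B \ {f}))) : v f ≤ v e := by
  have := hB.2 _ hB'
  rw [bweight_insert_sdiff_singleton hB.1.finite he hf] at this
  linarith

lemma MinBase.exchange_of_le [M.RankFinite] (hB : MinBase M v B) (he : e ∉ B) (hf : f ∈ B)
    (hB' : M.IsBase (insert e (B \ {f}))) (hle : v e ≤ v f) :
    MinBase M v (insert e (B \ {f})) := by
  refine ⟨hB', fun B'' hB'' => ?_⟩
  rw [bweight_insert_sdiff_singleton hB.1.finite he hf]
  linarith [hB.2 B'' hB'']

lemma MinBase.notMem_closure_setOf_lt [M.RankFinite] (hB : MinBase M v B) (he : e ∈ B) :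
    e ∉ M.closure {f | v f < v e} := by
  intro hcl
  have heB : e ∉ M.closure (B \ {e}) := hB.1.indep.notMem_closure_sdiff_of_mem he
  rw [← closure_inter_ground] at hcl
  have hspan : ¬ {f | v f < v e} ∩ M.E ⊆ M.closure (B \ {e}) := fun h =>
    heB (M.closure_subset_closure_of_subset_closure h hcl)
  obtain ⟨f, ⟨hfe, hfE⟩, hfB⟩ := not_subset.1 hspan
  have hfB' : f ∉ B := fun hf =>
    hfB (M.mem_closure_of_mem' ⟨hf, by rintro rfl; exact (lt_irrefl (v f)) hfe⟩ hfE)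
  have := hB.le_of_exchange hfB' he (hB.1.exchange_base_of_notMem_closure he hfB hfE)
  exact (this.trans_lt hfe).false

lemma exists_minBase_mem_of_notMem_closure [M.Finite] (heE : e ∈ M.E)
    (hcl : e ∉ M.closure {f | v f < v e}) : ∃ B, MinBase M v B ∧ e ∈ B := by
  obtain ⟨B, hB⟩ := exists_minBase (M := M) v
  by_cases heB : e ∈ B
  · exact ⟨B, hB, heB⟩
  -- the fundamental circuit of `e` cannot lie below `e`, so it offers an exchange partner
  have hC := hB.1.fundCircuit_isCircuit heE heB
  have hlighter : ¬ M.fundCircuit e B \ {e} ⊆ {f | v f < v e} := fun h =>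
    hcl (M.closure_subset_closure h (hC.mem_closure_sdiff_singleton_of_mem (mem_fundCircuit ..)))
  obtain ⟨f, ⟨hfC, hfe⟩, hvf⟩ := not_subset.1 hlighter
  have hfB : f ∈ B := ((M.fundCircuit_subset_insert e B) hfC).resolve_left hfe
  have hB' := hB.1.exchange_isBase_of_indep' hfB heB
    ((hB.1.indep.mem_fundCircuit_iff (by rwa [hB.1.closure_eq]) heB).1 hfC)
  rw [← insert_sdiff_singleton_comm (Ne.symm hfe)] at hB'
  exact ⟨_, hB.exchange_of_le heB hfB hB' (not_lt.1 hvf), mem_insert _ _⟩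

lemma mUltrametric_iff [M.Finite] :
    MUltrametric M v ↔ ∀ e ∈ M.E, e ∉ M.closure {f | v f < v e} :=
  forall₂_congr fun _ heE => ⟨fun ⟨_, hB, he⟩ => hB.notMem_closure_setOf_lt he,
    exists_minBase_mem_of_notMem_closure heE⟩

lemma MUltrametric.const_add [M.Finite] (hv : MUltrametric M v) (c : ℝ) :
    MUltrametric M (fun e => c + v e) := by
  simpa only [mUltrametric_iff, add_lt_add_iff_left] using hv

lemma MUltrametric.max [M.Finite] (hu : MUltrametric M u) (hw : MUltrametric M w) :
    MUltrametric M (fun e => max (u e) (w e)) := by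
  rw [mUltrametric_iff] at *
  intro e heE hcl
  rcases le_total (u e) (w e) with h | h
  · refine hw e heE (M.closure_subset_closure (fun f hf => ?_) hcl)
    simp only [mem_ofPred_eq, max_eq_right h] at hf ⊢
    exact (le_max_right _ _).trans_lt hf
  · refine hu e heE (M.closure_subset_closure (fun f hf => ?_) hcl)
    simp only [mem_ofPred_eq, max_eq_left h] at hf ⊢
    exact (le_max_left _ _).trans_lt hf

end

lemma max_add_add_mem_uIcc {lam mu : ℝ} (hlm : max lam mu = 0) (a b : ℝ) :
    max (lam + a) (mu + b) ∈ uIcc a b := by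
  have hlam : lam ≤ 0 := hlm ▸ le_max_left lam mu
  have hmu : mu ≤ 0 := hlm ▸ le_max_right lam mu
  refine ⟨?_, max_le_max (by linarith) (by linarith)⟩
  rcases max_choice lam mu with h | h <;> rw [h] at hlm <;> subst hlm
  · exact (min_le_left a b).trans (by simp)
  · exact (min_le_right a b).trans (by simp)

lemma abs_sub_le_max_of_mem_uIcc {x a b c : ℝ} (hc : c ∈ uIcc a b) :
    |x - c| ≤ max |x - a| |x - b| := by
  obtain ⟨hac, hcb⟩ := hc
  grind [abs_le, le_max_iff, min_le_iff, le_abs]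

lemma abs_sub_le_linf [Fintype α] [Nonempty α] (x u : α → ℝ) (e : α) :
    |x e - u e| ≤ linf x u :=
  Finset.le_sup' (fun e => |x e - u e|) (Finset.mem_univ e)

lemma linf_le_max_of_mem_uIcc [Fintype α] [Nonempty α] {x u v w : α → ℝ}
    (h : ∀ e, v e ∈ uIcc (u e) (w e)) : linf x v ≤ max (linf x u) (linf x w) :=
  Finset.sup'_le _ _ fun e _ => (abs_sub_le_max_of_mem_uIcc (h e)).trans
    (max_le_max (abs_sub_le_linf x u e) (abs_sub_le_linf x w e))

theorem stmt11_general [Fintype α] [Nonempty α] (M : Matroid α) (x : α → ℝ) (u w : α → ℝ)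
    (hu : u ∈ CSet M x) (hw : w ∈ CSet M x) (lam mu : ℝ) (hlm : max lam mu = 0) :
    (fun e => max (lam + u e) (mu + w e)) ∈ CSet M x := by
  obtain ⟨huU, huN⟩ := hu
  obtain ⟨hwU, hwN⟩ := hw
  refine ⟨(huU.const_add lam).max (hwU.const_add mu), fun u' hu' => ?_⟩
  calc linf x (fun e => max (lam + u e) (mu + w e))
      ≤ max (linf x u) (linf x w) := linf_le_max_of_mem_uIcc fun e => max_add_add_mem_uIcc hlm _ _
    _ = linf x u := max_eq_left (hwN u huU)
    _ ≤ linf x u' := huN u' hu'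

/-- The set of `M`-ultrametrics `l∞`-nearest to `x` is tropically convex. -/
theorem stmt11 [Fintype α] [Nonempty α] (M : Matroid α) (hE : M.E = Set.univ)
    (hloop : ∀ e, M.Indep {e}) (x : α → ℝ) (u w : α → ℝ)
    (hu : u ∈ CSet M x) (hw : w ∈ CSet M x) (lam mu : ℝ) (hlm : max lam mu = 0) :
    (fun e => max (lam + u e) (mu + w e)) ∈ CSet M x :=
  stmt11_general M x u w hu hw lam mu hlm
end

section
/- Let M be a loopless matroid on a finite nonempty ground set E, let x ∈ ℝ^E, and suppose x^m ∈ C(x) satisfies w(e) ≤ x^m(e) for all w ∈ C(x) and all e ∈ E. Define S₀ = {x^m}, and for i ≥ 1 let S_i be the set of all M-ultrametrics obtained from some w ∈ S_{i−1} by sliding a mobile member of some resolution of T(w) all the way down. Then the union ⋃_{i≥0} S_i is a finite set. -/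
variable {α : Type*}

/-- A circuit of `M`: a dependent subset of the ground set all of whose proper
subsets are independent. -/
def MCircuit (M : Matroid α) (C : Set α) : Prop :=
  C ⊆ M.E ∧ ¬ M.Indep C ∧ ∀ D : Set α, D ⊂ C → M.Indep D

/-- A matroid is connected if its ground set is nonempty and any two distinct
elements of the ground set lie in a common circuit. -/
def MConnected (M : Matroid α) : Prop :=
  M.E.Nonempty ∧ ∀ a ∈ M.E, ∀ b ∈ M.E, a ≠ b → ∃ C, MCircuit M C ∧ a ∈ C ∧ b ∈ C

/-- The connected component of `e` in `M`: the equivalence class of `e` under the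
relation "lying in a common circuit". -/
def MComponent (M : Matroid α) (e : α) : Set α :=
  {f ∈ M.E | f = e ∨ ∃ C, MCircuit M C ∧ e ∈ C ∧ f ∈ C}

/-- A nested set of `M`: a collection of nonempty connected flats containing every
connected component of `M`, such that the closure of the union of any ≥ 2 pairwise
incomparable members induces a disconnected restriction. -/
def NestedSet (M : Matroid α) (S : Set (Set α)) : Prop :=
  (∀ F ∈ S, F.Nonempty ∧ M.IsFlat F ∧ MConnected (M.restrict F)) ∧
  (∀ e ∈ M.E, MComponent M e ∈ S) ∧
  (∀ T : Finset (Set α), ↑T ⊆ S → 2 ≤ T.card →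
    (∀ F ∈ T, ∀ G ∈ T, F ≠ G → ¬ F ⊆ G ∧ ¬ G ⊆ F) →
    ¬ MConnected (M.restrict (M.closure (⋃ F ∈ T, F))))

/-- `a : S → ℝ` is compatible with `S`: weakly monotone with respect to inclusion. -/
def Compat (S : Set (Set α)) (a : Set α → ℝ) : Prop :=
  ∀ F ∈ S, ∀ G ∈ S, F ⊆ G → a F ≤ a G

/-- `a : S → ℝ` is strictly compatible with `S`. -/
def StrictCompat (S : Set (Set α)) (a : Set α → ℝ) : Prop :=
  ∀ F ∈ S, ∀ G ∈ S, F ⊂ G → a F < a G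

/-- `F` is the minimal member of `S` containing `e`. -/
def MinMem (S : Set (Set α)) (e : α) (F : Set α) : Prop :=
  F ∈ S ∧ e ∈ F ∧ ∀ G ∈ S, e ∈ G → F ⊆ G

/-- `w` is the vector `w^{S,a}`, i.e. `w e = a (F_e)` where `F_e` is the minimal
member of `S` containing `e`, for every `e` in the ground set. -/
def Represents (M : Matroid α) (S : Set (Set α)) (a : Set α → ℝ) (w : α → ℝ) : Prop :=
  ∀ e ∈ M.E, ∃ F, MinMem S e F ∧ w e = a F

/-- `S` is the topology `T(w)` of the `M`-ultrametric `w`: the unique nested set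
admitting a strictly compatible weighting representing `w`. -/
def IsTopologyOf (M : Matroid α) (w : α → ℝ) (S : Set (Set α)) : Prop :=
  NestedSet M S ∧ ∃ a, StrictCompat S a ∧ Represents M S a w

/-- The rank of a set in a matroid: the largest cardinality of an independent subset. -/
noncomputable def mrank (M : Matroid α) (X : Set α) : ℕ :=
  sSup {n | ∃ I, I ⊆ X ∧ M.Indep I ∧ I.ncard = n}

/-- A polytomy of a nested set `S`: a member `F` with
`r(F) - r(⋃{G ∈ S : G ⊊ F}) ≥ 2`. -/
def Polytomy (M : Matroid α) (S : Set (Set α)) (F : Set α) : Prop :=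
  F ∈ S ∧ mrank M (⋃₀ {G | G ∈ S ∧ G ⊂ F}) + 2 ≤ mrank M F

/-- A resolution of a nested set `S`: a nested set containing `S` with no polytomies. -/
def MResolution (M : Matroid α) (S S' : Set (Set α)) : Prop :=
  NestedSet M S' ∧ S ⊆ S' ∧ ∀ F ∈ S', ¬ Polytomy M S' F

open scoped Classical in
/-- The weighting obtained from `a` by changing its value at `F` to `t`. -/
noncomputable def updF (a : Set α → ℝ) (F : Set α) (t : ℝ) : Set α → ℝ :=
  fun G => if G = F then t else a G

/-- `F ∈ S` is mobile for `w = w^{S,a} ∈ C(x)`: its weight can be strictly decreased,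
keeping compatibility, so that the resulting vector is still in `C(x)`. -/
def Mobile [Fintype α] [Nonempty α] (M : Matroid α) (x : α → ℝ) (S : Set (Set α))
    (a : Set α → ℝ) (w : α → ℝ) (F : Set α) : Prop :=
  F ∈ S ∧ ∃ t < a F, Compat S (updF a F t) ∧
    ∃ w', Represents M S (updF a F t) w' ∧ w' ≠ w ∧ w' ∈ CSet M x

/-- `w'` is obtained from `w = w^{S,a}` by sliding the mobile flat `F` all the way
down: the new weight `t` of `F` is either the maximum weight of the members of `S`
properly contained in `F`, or the least value keeping the result in `C(x)`. -/
def SlideTo [Fintype α] [Nonempty α] (M : Matroid α) (x : α → ℝ) (S : Set (Set α))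
    (a : Set α → ℝ) (w : α → ℝ) (F : Set α) (w' : α → ℝ) : Prop :=
  F ∈ S ∧ ∃ t < a F, Compat S (updF a F t) ∧ Represents M S (updF a F t) w' ∧
    w' ≠ w ∧ w' ∈ CSet M x ∧
    (IsGreatest {r | ∃ G, G ∈ S ∧ G ⊂ F ∧ r = a G} t ∨
      IsLeast {s | Compat S (updF a F s) ∧
        ∃ w'', Represents M S (updF a F s) w'' ∧ w'' ∈ CSet M x} t)

/-- `w'` is obtained from `w` by sliding some mobile member of some resolution of
`T(w)` all the way down. -/
def SlideStep [Fintype α] [Nonempty α] (M : Matroid α) (x : α → ℝ) (w w' : α → ℝ) :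
    Prop :=
  ∃ (T S : Set (Set α)) (a : Set α → ℝ) (F : Set α),
    IsTopologyOf M w T ∧ MResolution M T S ∧ Compat S a ∧
    Represents M S a w ∧ SlideTo M x S a w F w'

/-- The sequence `S₀ = {x^m}`, `S_{i+1} = ` vectors obtained from members of `S_i`
by sliding a mobile flat all the way down. -/
def Sseq [Fintype α] [Nonempty α] (M : Matroid α) (x xm : α → ℝ) : ℕ → Set (α → ℝ)
  | 0 => {xm}
  | i + 1 => {w' | ∃ w ∈ Sseq M x xm i, SlideStep M x w w'}

/-- `v` is a tropical vertex of `C(x)`. -/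
def TropVertex [Fintype α] [Nonempty α] (M : Matroid α) (x v : α → ℝ) : Prop :=
  v ∈ CSet M x ∧ ∀ u ∈ CSet M x, ∀ w ∈ CSet M x, ∀ lam mu : ℝ, max lam mu = 0 →
    (∀ e, v e = max (lam + u e) (mu + w e)) → v = u ∨ v = w

/-!
Every vector produced takes its values in the finite set of values of `x^m` and of `x - d`,
where `d` is the common distance from `x` to the members of `C(x)`. A slide moves the weight of
one member `F` of the nested set down to a new level `t`, and changes only the coordinates whose
minimal member is `F`. If `t` is the weight of another member, it is already a value of the old
vector, since every member of a nested set is the minimal member of one of its elements.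
Otherwise `t` is the least level keeping the vector in `C(x)`; if it were not of the form
`x f - d`, lowering it slightly would keep the distance to `x` at most `d` and would not change
the weak order of the coordinates. Minimum bases depend only on that weak order (a base is
minimum iff it meets every sublevel set in as many elements as any other base), so the lowered
vector would still be an `M`-ultrametric in `C(x)`.
-/

theorem Finset.sum_le_sum_of_card_filter_le {ι β : Type*} [AddCommMonoid β] [LinearOrder β]
    [IsOrderedAddMonoid β] (w : ι → β) {s t : Finset ι} (hcard : s.card = t.card)
    (hcount : ∀ g ∈ t, {e ∈ t | w e ≤ w g}.card ≤ {e ∈ s | w e ≤ w g}.card) :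
    ∑ e ∈ s, w e ≤ ∑ e ∈ t, w e := by
  classical
  induction t using Finset.strongInduction generalizing s with
  | _ t ih =>
    obtain rfl | ht := t.eq_empty_or_nonempty
    · simp [Finset.card_eq_zero.mp hcard]
    obtain ⟨e₁, he₁, hmin₁⟩ := t.exists_min_image w ht
    obtain ⟨e₀, he₀, hmin₀⟩ := s.exists_min_image w (Finset.card_pos.mp (hcard ▸ ht.card_pos))
    have hle : w e₀ ≤ w e₁ := by
      have hpos : 0 < {e ∈ t | w e ≤ w e₁}.card :=
        Finset.card_pos.mpr ⟨e₁, Finset.mem_filter.mpr ⟨he₁, le_rfl⟩⟩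
      obtain ⟨e, he⟩ := Finset.card_pos.mp (hpos.trans_le (hcount e₁ he₁))
      exact (hmin₀ e (Finset.mem_filter.mp he).1).trans (Finset.mem_filter.mp he).2
    have hrest : ∑ e ∈ s.erase e₀, w e ≤ ∑ e ∈ t.erase e₁, w e := by
      refine ih _ (Finset.erase_ssubset he₁) (by simp [he₀, he₁, hcard]) fun g hg => ?_
      have hg₁ : w e₁ ≤ w g := hmin₁ g (Finset.mem_of_mem_erase hg)
      simp only [Finset.filter_erase]
      rw [Finset.card_erase_of_mem (Finset.mem_filter.mpr ⟨he₁, hg₁⟩),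
        Finset.card_erase_of_mem (Finset.mem_filter.mpr ⟨he₀, hle.trans hg₁⟩)]
      exact Nat.sub_le_sub_right (hcount g (Finset.mem_of_mem_erase hg)) 1
    rw [← Finset.add_sum_erase s w he₀, ← Finset.add_sum_erase t w he₁]
    exact add_le_add hle hrest

namespace MinBase

variable {M : Matroid α} {w : α → ℝ} {B B' : Set α}

lemma le_of_exchange_s14 [M.RankFinite] (hB : MinBase M w B) (hB' : M.IsBase B') {e f : α}
    (he : B' \ B = {e}) (hf : B \ B' = {f}) : w f ≤ w e := by
  have h := hB.2 B' hB'
  rw [bweight, bweight, ← finsum_mem_inter_add_sdiff B' hB.1.finite,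
    ← finsum_mem_inter_add_sdiff B hB'.finite, Set.inter_comm, he, hf, finsum_mem_singleton,
    finsum_mem_singleton] at h
  linarith

lemma ncard_inter_sublevel_le [M.RankFinite] (hB : MinBase M w B) (hB' : M.IsBase B') (c : ℝ) :
    (B' ∩ {e | w e ≤ c}).ncard ≤ (B ∩ {e | w e ≤ c}).ncard := by
  set I := B ∩ {e | w e ≤ c}
  by_contra! hlt
  have hIfin : I.Finite := hB.1.finite.inter_of_left _
  obtain ⟨e, ⟨⟨-, hec : w e ≤ c⟩, heI⟩, hins⟩ := (hB.1.indep.inter_right _).augment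
    (hB'.indep.inter_right _) (by
      rwa [← hIfin.cast_ncard_eq, ← (hB'.finite.inter_of_left _).cast_ncard_eq, Nat.cast_lt])
  have heB : e ∉ B := fun heB => heI ⟨heB, hec⟩
  obtain ⟨B₂, hB₂, hIB₂, hB₂B⟩ := hins.exists_isBase_subset_union_isBase hB.1
  have hdiff : B₂ \ B = {e} := by
    refine Set.eq_singleton_iff_unique_mem.mpr ⟨⟨hIB₂ (Set.mem_insert _ _), heB⟩, ?_⟩
    rintro f ⟨hfB₂, hfB⟩
    rcases hB₂B hfB₂ with (rfl | hfI) | hfB'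
    · rfl
    · exact absurd hfI.1 hfB
    · exact absurd hfB' hfB
  obtain ⟨f, hf⟩ := Set.encard_eq_one.mp <| by
    rw [hB.1.encard_sdiff_comm hB₂, hdiff, Set.encard_singleton]
  have hfB : f ∈ B \ B₂ := hf ▸ rfl
  have hfc : c < w f := lt_of_not_ge fun hfc => hfB.2 (hIB₂ (Or.inr ⟨hfB.1, hfc⟩))
  linarith [hB.le_of_exchange_s14 hB₂ hdiff hf]

end MinBase

section OrderInvariance

variable {M : Matroid α} [M.RankFinite] {B : Set α}

lemma minBase_of_ncard_inter_sublevel_le {w : α → ℝ} (hB : M.IsBase B)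
    (h : ∀ B', M.IsBase B' → ∀ g ∈ B',
      (B' ∩ {e | w e ≤ w g}).ncard ≤ (B ∩ {e | w e ≤ w g}).ncard) :
    MinBase M w B := by
  refine ⟨hB, fun B' hB' => ?_⟩
  have hcard : ∀ {X : Set α} (hX : X.Finite) (c : ℝ),
      {e ∈ hX.toFinset | w e ≤ c}.card = (X ∩ {e | w e ≤ c}).ncard := by
    intro X hX c
    rw [← Set.ncard_coe_finset]
    congr 1
    ext
    simp
  rw [bweight, bweight, finsum_mem_eq_finite_toFinset_sum _ hB.finite,
    finsum_mem_eq_finite_toFinset_sum _ hB'.finite]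
  refine Finset.sum_le_sum_of_card_filter_le w ?_ fun g hg => ?_
  · rw [← Set.ncard_eq_toFinset_card _ hB.finite, ← Set.ncard_eq_toFinset_card _ hB'.finite,
      hB.ncard_eq_ncard_of_isBase hB']
  · rw [hcard, hcard]
    exact h B' hB' g (by simpa using hg)

lemma MinBase.of_le_iff {w₁ w₂ : α → ℝ} (h : ∀ p q, w₁ p ≤ w₁ q ↔ w₂ p ≤ w₂ q)
    (hB : MinBase M w₁ B) : MinBase M w₂ B :=
  minBase_of_ncard_inter_sublevel_le hB.1 fun B' hB' g _ => by
    simpa only [← h _ g] using hB.ncard_inter_sublevel_le hB' (w₁ g)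

lemma MUltrametric.of_le_iff {w₁ w₂ : α → ℝ} (h : ∀ p q, w₁ p ≤ w₁ q ↔ w₂ p ≤ w₂ q)
    (hw : MUltrametric M w₁) : MUltrametric M w₂ := fun e he =>
  let ⟨B, hB, heB⟩ := hw e he
  ⟨B, hB.of_le_iff h, heB⟩

end OrderInvariance

lemma MinMem.unique {S : Set (Set α)} {e : α} {F G : Set α} (hF : MinMem S e F)
    (hG : MinMem S e G) : F = G :=
  (hF.2.2 G hG.1 hG.2.1).antisymm (hG.2.2 F hF.1 hF.2.1)

lemma NestedSet.exists_minMem [Finite α] {M : Matroid α} {S : Set (Set α)} {G : Set α}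
    (hS : NestedSet M S) (hG : G ∈ S) (hmin : ∀ e ∈ G, ∃ H, MinMem S e H) :
    ∃ f, MinMem S f G := by
  -- Otherwise the maximal members of `S` properly inside `G` are at least two pairwise
  -- incomparable members whose union is the connected flat `G`.
  by_contra! hno
  set P : Set α → Prop := fun K => K ∈ S ∧ K ⊂ G
  have hcover : ∀ e ∈ G, ∃ K, Maximal P K ∧ e ∈ K := by
    intro e he
    obtain ⟨H, hH⟩ := hmin e he
    have hHG : P H := ⟨hH.1, (hH.2.2 G hG he).ssubset_of_ne fun h => hno e (h ▸ hH)⟩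
    obtain ⟨K, hHK, hK⟩ := (Set.toFinite {K | P K}).exists_le_maximal hHG
    exact ⟨K, hK, hHK hH.2.1⟩
  set T : Finset (Set α) := (Set.toFinite {K | Maximal P K}).toFinset
  have hmemT : ∀ {K}, K ∈ T ↔ Maximal P K := by simp [T]
  have hunion : (⋃ K ∈ T, K) = G := by
    refine (Set.iUnion₂_subset fun K hK => (hmemT.mp hK).prop.2.subset).antisymm fun e he => ?_
    obtain ⟨K, hK, heK⟩ := hcover e he
    exact Set.mem_biUnion (hmemT.mpr hK) heK
  obtain ⟨hGne, hGflat, hGconn⟩ := hS.1 G hG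
  by_cases hT : 2 ≤ T.card
  · refine hS.2.2 T (fun K hK => (hmemT.mp hK).prop.1) hT (fun K hK L hL hKL => ?_) ?_
    · exact ⟨fun h => hKL ((hmemT.mp hK).eq_of_le (hmemT.mp hL).prop h),
        fun h => hKL ((hmemT.mp hL).eq_of_le (hmemT.mp hK).prop h).symm⟩
    · rwa [hunion, hGflat.closure]
  · obtain ⟨e, he⟩ := hGne
    obtain ⟨K, hK, -⟩ := hcover e he
    refine hK.prop.2.not_subset fun f hf => ?_
    obtain ⟨L, hL, hfL⟩ := hcover f hf
    rwa [Finset.card_le_one.mp (by omega) K (hmemT.mpr hK) L (hmemT.mpr hL)]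

lemma Represents.exists_eq [Finite α] {M : Matroid α} {S : Set (Set α)} {a : Set α → ℝ}
    {w : α → ℝ} {G : Set α} (hrep : Represents M S a w) (hS : NestedSet M S) (hG : G ∈ S) :
    ∃ f, w f = a G := by
  obtain ⟨f, hf⟩ := hS.exists_minMem hG fun e he =>
    let ⟨H, hH, _⟩ := hrep e ((hS.1 G hG).2.1.subset_ground he)
    ⟨H, hH⟩
  obtain ⟨H, hH, hwf⟩ := hrep f ((hS.1 G hG).2.1.subset_ground hf.2.1)
  exact ⟨f, hwf.trans (congrArg a (hH.unique hf))⟩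

open Filter Topology

lemma eventually_nhdsLT_forall_lt {ι : Type*} [Finite ι] (r : ι → ℝ) (t : ℝ) :
    ∀ᶠ s in 𝓝[<] t, ∀ i, r i < t → r i < s :=
  eventually_all.mpr fun i => by
    by_cases hi : r i < t
    · exact ((eventually_gt_nhds hi).filter_mono nhdsWithin_le_nhds).mono fun _ hs _ => hs
    · exact Eventually.of_forall fun _ h => absurd h hi

noncomputable def lowerLevel (w : α → ℝ) (t s : ℝ) : α → ℝ := fun f => if w f = t then s else w f

lemma lowerLevel_le_iff {w : α → ℝ} {s t : ℝ} (hst : s < t) (hgap : ∀ f, w f < t → w f < s)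
    (p q : α) : w p ≤ w q ↔ lowerLevel w t s p ≤ lowerLevel w t s q := by
  have hp := hgap p
  have hq := hgap q
  unfold lowerLevel
  split_ifs <;> grind

section CSet

variable [Fintype α] [Nonempty α] {M : Matroid α} {x w : α → ℝ}

lemma abs_sub_le_linf_s14 (x w : α → ℝ) (f : α) : |x f - w f| ≤ linf x w :=
  Finset.le_sup' (fun e => |x e - w e|) (Finset.mem_univ f)

lemma linf_eq_of_mem_CSet {u : α → ℝ} (hu : u ∈ CSet M x) (hw : w ∈ CSet M x) :
    linf x u = linf x w :=
  (hu.2 w hw.1).antisymm (hw.2 u hu.1)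

lemma lowerLevel_mem_CSet {s t : ℝ} (hw : w ∈ CSet M x) (hst : s < t)
    (hgap : ∀ f, w f < t → w f < s) (hx : ∀ f, w f = t → x f - linf x w ≤ s) :
    lowerLevel w t s ∈ CSet M x := by
  have hdist : linf x (lowerLevel w t s) ≤ linf x w := by
    refine Finset.sup'_le _ _ fun f _ => ?_
    have hf := abs_sub_le_linf_s14 x w f
    unfold lowerLevel
    split_ifs with hft
    · rw [hft, abs_le] at hf
      rw [abs_le]
      constructor <;> linarith [hx f hft]
    · exact hf
  exact ⟨hw.1.of_le_iff (lowerLevel_le_iff hst hgap), fun u hu => hdist.trans (hw.2 u hu)⟩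

end CSet

section Sliding

variable {S : Set (Set α)} {a : Set α → ℝ} {F : Set α} {s t : ℝ}

lemma Compat.updF_of_le (hc : Compat S (updF a F t)) (ha : ∀ G ∈ S, G ≠ F → a G ≠ t)
    (hst : s ≤ t) (hgap : ∀ G, a G < t → a G < s) : Compat S (updF a F s) := by
  intro G hG H hH hGH
  have h := hc G hG H hH hGH
  have hG' := hgap G
  have hG'' := ha G hG
  unfold updF at h ⊢
  split_ifs at h ⊢ <;> grind

lemma Represents.lowerLevel_updF {M : Matroid α} {w : α → ℝ}
    (hrep : Represents M S (updF a F t) w) (ha : ∀ G ∈ S, G ≠ F → a G ≠ t) (s : ℝ) :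
    Represents M S (updF a F s) (lowerLevel w t s) := by
  intro e he
  obtain ⟨H, hH, hwe⟩ := hrep e he
  refine ⟨H, hH, ?_⟩
  have hH' := ha H hH.1
  unfold lowerLevel updF at *
  split_ifs at hwe ⊢ <;> grind

variable [Fintype α] [Nonempty α] {M : Matroid α} {x w w' : α → ℝ}

lemma exists_lt_updF_mem_CSet (hc : Compat S (updF a F t))
    (hrep : Represents M S (updF a F t) w) (hw : w ∈ CSet M x)
    (ha : ∀ G ∈ S, G ≠ F → a G ≠ t) (hx : ∀ f, x f - linf x w ≠ t) :
    ∃ s < t, Compat S (updF a F s) ∧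
      ∃ w', Represents M S (updF a F s) w' ∧ w' ∈ CSet M x := by
  -- Just below `t` lies no other weight and no `x f - d`, so lowering the level `t` to such an
  -- `s` keeps both the weak order of the coordinates and their distance to `x`.
  obtain ⟨s, hst, hwgap, hxgap, hagap⟩ := (eventually_mem_nhdsWithin.and
    ((eventually_nhdsLT_forall_lt w t).and ((eventually_nhdsLT_forall_lt
      (fun f => x f - linf x w) t).and (eventually_nhdsLT_forall_lt a t)))).exists
  refine ⟨s, hst, hc.updF_of_le ha hst.le hagap, lowerLevel w t s, hrep.lowerLevel_updF ha s,
    lowerLevel_mem_CSet hw hst hwgap fun f hf => (hxgap f ?_).le⟩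
  have hf' := abs_sub_le_linf_s14 x w f
  rw [hf, abs_le] at hf'
  exact (show x f - linf x w ≤ t by linarith).lt_of_ne (hx f)

lemma SlideTo.mem_CSet (h : SlideTo M x S a w F w') : w' ∈ CSet M x :=
  let ⟨_, _, _, _, _, _, hw', _⟩ := h
  hw'

lemma SlideTo.mem_range (hS : NestedSet M S) (hrep : Represents M S a w)
    (h : SlideTo M x S a w F w') {e : α} (he : e ∈ M.E) :
    w' e ∈ Set.range w ∪ Set.range fun f => x f - linf x w' := by
  obtain ⟨-, t, -, hc, hrep', -, hw', hslide⟩ := h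
  obtain ⟨H, hH, hwe⟩ := hrep' e he
  by_cases hHF : H = F
  swap
  · obtain ⟨H', hH', hwe'⟩ := hrep e he
    refine Or.inl ⟨e, ?_⟩
    rw [hwe, hwe', hH'.unique hH, updF, if_neg hHF]
  rw [hwe, hHF, updF, if_pos rfl]
  by_cases ha : ∃ G ∈ S, G ≠ F ∧ a G = t
  · obtain ⟨G, hG, -, rfl⟩ := ha
    exact Or.inl (hrep.exists_eq hS hG)
  by_cases hx : ∃ f, x f - linf x w' = t
  · exact Or.inr hx
  push Not at ha hx
  exfalso
  rcases hslide with hgreatest | hleast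
  · obtain ⟨G, hG, hGF, ht⟩ := hgreatest.1
    exact ha G hG hGF.ne ht.symm
  · obtain ⟨s, hst, hs⟩ := exists_lt_updF_mem_CSet hc hrep' hw' ha hx
    exact (hleast.2 hs).not_gt hst

end Sliding

namespace SlideStep

variable [Fintype α] [Nonempty α] {M : Matroid α} {x w w' : α → ℝ}

lemma mem_CSet (h : SlideStep M x w w') : w' ∈ CSet M x :=
  let ⟨_, _, _, _, _, _, _, _, hslide⟩ := h
  hslide.mem_CSet

lemma mem_range (h : SlideStep M x w w') {e : α} (he : e ∈ M.E) :
    w' e ∈ Set.range w ∪ Set.range fun f => x f - linf x w' :=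
  let ⟨_, _, _, _, _, hres, _, hrep, hslide⟩ := h
  hslide.mem_range hres.1 hrep he

end SlideStep

theorem stmt14_general [Fintype α] [Nonempty α] (M : Matroid α) (hE : M.E = Set.univ)
    (x xm : α → ℝ) (hxm : xm ∈ CSet M x) :
    (⋃ i, Sseq M x xm i).Finite := by
  set V := Set.range xm ∪ Set.range fun f => x f - linf x xm
  have hSseq : ∀ i, ∀ w ∈ Sseq M x xm i, w ∈ CSet M x ∧ Set.range w ⊆ V := by
    intro i
    induction i with
    | zero => rintro w rfl; exact ⟨hxm, Set.subset_union_left⟩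
    | succ i ih =>
      rintro w' ⟨w, hw, hstep⟩
      refine ⟨hstep.mem_CSet, ?_⟩
      rintro _ ⟨e, rfl⟩
      rcases hstep.mem_range (hE ▸ Set.mem_univ e) with he | he
      · exact (ih w hw).2 he
      · rw [linf_eq_of_mem_CSet hstep.mem_CSet hxm] at he
        exact Or.inr he
  have hV : V.Finite := (Set.finite_range xm).union (Set.finite_range _)
  refine (Set.Finite.pi' (t := fun _ : α => V) fun _ => hV).subset ?_
  intro w hw
  obtain ⟨i, hwi⟩ := Set.mem_iUnion.mp hw
  exact fun e => (hSseq i w hwi).2 ⟨e, rfl⟩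

/-- Starting from the coordinatewise maximal element `x^m` of `C(x)` and repeatedly
sliding mobile flats of resolutions of topologies all the way down, only finitely many
`M`-ultrametrics are produced: `⋃ i, S_i` is finite. -/
theorem stmt14 [Fintype α] [Nonempty α] (M : Matroid α) (hE : M.E = Set.univ)
    (hloop : ∀ e, M.Indep {e}) (x xm : α → ℝ) (hxm : xm ∈ CSet M x)
    (hmax : ∀ w ∈ CSet M x, ∀ e, w e ≤ xm e) :
    (⋃ i, Sseq M x xm i).Finite :=
  stmt14_general M hE x xm hxm
end
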